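/- Let g : ℝ → ℂ be even, continuous and integrable, with Fourier transform supported in (−1, 1), and with absolutely convergent sum over the integers. Then ∑_{m=0}^∞ ε_m g(m) = ∫₀^∞ g(t) dt, where ε_0 = 1/2 and ε_m = 1 for m ≥ 1. -/

import Mathlib

/-!
Apply Poisson summation not to `g` but to `𝓕 g`, which is continuous and supported in `[-1, 1]`.
Its only nonzero sample at an integer is `𝓕 g 0 = ∫ g`, while by Fourier inversion its own
Fourier transform at `n` is `g (-n)`. Hence `∑_{n ∈ ℤ} g n = ∫ g`, and evenness halves both sides.
-/

open Real MeasureTheory Filter FourierTransform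

noncomputable def eps (m : ℕ) : ℝ := if m = 0 then 1 / 2 else 1

theorem HasCompactSupport.eventuallyEq_zero_cocompact {α E : Type*} [TopologicalSpace α] [Zero E]
    {f : α → E} (hf : HasCompactSupport f) : f =ᶠ[cocompact α] 0 :=
  Filter.mem_of_superset hf.isCompact.compl_mem_cocompact fun _ hx =>
    image_eq_zero_of_notMem_tsupport hx

theorem Real.tsum_eq_tsum_fourier_of_hasCompactSupport {f : ℝ → ℂ} (hc : Continuous f)
    (hf : HasCompactSupport f) (hFf : Summable fun n : ℤ => 𝓕 f n) (x : ℝ) :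
    ∑' n : ℤ, f (x + n) = ∑' n : ℤ, 𝓕 f n * fourier n (x : UnitAddCircle) :=
  Real.tsum_eq_tsum_fourier_of_rpow_decay_of_summable hc one_lt_two
    ((Asymptotics.isBigO_zero _ _).congr' hf.eventuallyEq_zero_cocompact.symm EventuallyEq.rfl) hFf x

theorem fourier_fourier_eq_comp_neg {V E : Type*} [NormedAddCommGroup V] [InnerProductSpace ℝ V]
    [FiniteDimensional ℝ V] [MeasurableSpace V] [BorelSpace V]
    [NormedAddCommGroup E] [NormedSpace ℂ E] [CompleteSpace E] {f : V → E}
    (hc : Continuous f) (hf : Integrable f) (hFf : Integrable (𝓕 f)) (v : V) :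
    𝓕 (𝓕 f) v = f (-v) := by
  have := congrFun (hc.fourierInv_fourier_eq hf hFf) (-v)
  rwa [fourierInv_eq_fourier_neg, neg_neg] at this

theorem tsum_int_eq_two_smul_tsum_eps {E : Type*} [NormedAddCommGroup E] [NormedSpace ℝ E]
    [CompleteSpace E] {f : ℤ → E} (hf : f.Even) (hs : Summable f) :
    ∑' n, f n = (2 : ℝ) • ∑' m : ℕ, eps m • f m := by
  have hsucc : Summable fun m : ℕ => f (m + 1) := by
    have := (summable_int_iff_summable_nat_and_neg.mp hs).1
    exact_mod_cast (summable_nat_add_iff 1).mpr this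
  have heps : Summable fun m : ℕ => eps m • f m := by
    refine (summable_nat_add_iff 1).mp (hsucc.congr fun m => ?_)
    simp [eps]
  rw [tsum_int_eq_zero_add_two_mul_tsum_pnat hf hs, heps.tsum_eq_zero_add,
    tsum_pnat_eq_tsum_succ (f := fun n : ℕ => f n)]
  simp [eps, smul_add, smul_smul, two_smul]

theorem integral_eq_two_smul_integral_Ioi_of_even {E : Type*} [NormedAddCommGroup E]
    [NormedSpace ℝ E] {f : ℝ → E} (hf : ∀ t, f (-t) = f t) (hi : Integrable f) :
    ∫ t, f t = (2 : ℝ) • ∫ t in Set.Ioi 0, f t := by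
  have hIic : ∫ t in Set.Iic 0, f t = ∫ t in Set.Ioi 0, f t := by
    simpa only [hf, neg_zero] using integral_comp_neg_Iic 0 f
  rw [← intervalIntegral.integral_Iic_add_Ioi hi.integrableOn hi.integrableOn, hIic, two_smul]

theorem tsum_int_eq_integral_of_fourier_eq_zero_outside_Ioo {g : ℝ → ℂ} (hc : Continuous g)
    (hi : Integrable g) (hsupp : ∀ p, p ∉ Set.Ioo (-1 : ℝ) 1 → 𝓕 g p = 0)
    (hs : Summable fun n : ℤ => g n) :
    ∑' n : ℤ, g n = ∫ t, g t := by
  have hFc : Continuous (𝓕 g) := VectorFourier.fourierIntegral_continuous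
    Real.continuous_fourierChar continuous_inner hi
  have hFcs : HasCompactSupport (𝓕 g) :=
    HasCompactSupport.intro isCompact_Icc fun p hp =>
      hsupp p fun h => hp (Set.Ioo_subset_Icc_self h)
  have hFF := fourier_fourier_eq_comp_neg hc hi (hFc.integrable_of_hasCompactSupport hFcs)
  have hFsum : Summable fun n : ℤ => 𝓕 (𝓕 g) n := by
    simp only [hFF, ← Int.cast_neg]
    exact (Equiv.neg ℤ).summable_iff.mpr hs
  have hpoisson := Real.tsum_eq_tsum_fourier_of_hasCompactSupport hFc hFcs hFsum 0
  have hlhs : ∑' n : ℤ, 𝓕 g (0 + n) = ∫ t, g t := by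
    rw [tsum_eq_single 0]
    · simp [Real.fourier_eq]
    · intro n hn
      refine hsupp _ fun h => hn ?_
      obtain ⟨h₁, h₂⟩ := h
      rw [zero_add] at h₁ h₂
      have : (-1 : ℤ) < n ∧ n < 1 := ⟨by exact_mod_cast h₁, by exact_mod_cast h₂⟩
      omega
  rw [← hlhs, hpoisson]
  simp only [QuotientAddGroup.mk_zero, fourier_eval_zero, mul_one, hFF, ← Int.cast_neg]
  exact ((Equiv.neg ℤ).tsum_eq fun n : ℤ => g n).symm

theorem statement10 (g : ℝ → ℂ) (heven : ∀ t : ℝ, g (-t) = g t)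
    (hc : Continuous g) (hi : Integrable g)
    (hsupp : ∀ p : ℝ, p ∉ Set.Ioo (-1 : ℝ) 1 → VectorFourier.fourierIntegral Real.fourierChar volume (innerₗ ℝ) g p = 0)
    (habs : Summable fun n : ℤ => ‖g n‖) :
    ∑' m : ℕ, (eps m : ℂ) * g m = ∫ t in Set.Ioi (0:ℝ), g t := by
  have hs : Summable fun n : ℤ => g n := habs.of_norm
  have hpoisson := tsum_int_eq_integral_of_fourier_eq_zero_outside_Ioo hc hi hsupp hs
  rw [tsum_int_eq_two_smul_tsum_eps (fun n => by simpa using heven n) hs,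
    integral_eq_two_smul_integral_Ioi_of_even heven hi] at hpoisson
  simpa [Complex.real_smul] using smul_right_injective ℂ two_ne_zero hpoisson
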